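/- arXiv:2504.00411 — 3 statements merged into one kernel-verified Lean document; each statement's English description precedes it below -/
import Mathlib

section
/- If a randomized mechanism M satisfies (α, γ)-Rényi differential privacy for some α > 1, then for any 0 < δ < 1, M satisfies (ε, δ)-differential privacy with ε = γ + ln(1/δ)/(α−1). That is, for any adjacent inputs D, D' and measurable set S, Pr[M(D) ∈ S] ≤ e^ε · Pr[M(D') ∈ S] + δ. -/
/-!
Write `q = p D'`, `p = p D` and `c = e^ε`. Pointwise, either `p ≤ c q`, or `p / q > c`, in which
case `(p / q)^α q = (p / q)^(α-1) p ≥ c^(α-1) p`. Hence `p ≤ c q + c^(1-α) (p / q)^α q` everywhere.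
Integrating over `S` and bounding the Rényi moment `∫ (p / q)^α q` by `e^{γ(α-1)}` gives
`Pr[M(D) ∈ S] ≤ e^ε Pr[M(D') ∈ S] + e^{(γ-ε)(α-1)}`, and the choice of `ε` makes the last term `δ`.
-/

open MeasureTheory Real

lemma le_mul_add_rpow_mul_rpow_div_mul {a b c α : ℝ} (ha : 0 ≤ a) (hb : 0 < b) (hc : 0 < c)
    (hα : 1 ≤ α) : a ≤ c * b + c ^ (1 - α) * ((a / b) ^ α * b) := by
  have hrest : 0 ≤ c ^ (1 - α) * ((a / b) ^ α * b) := by positivity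
  rcases le_or_gt a (c * b) with hab | hab
  · linarith
  have hcr : c < a / b := (lt_div_iff₀ hb).mpr hab
  have hr : 0 < a / b := hc.trans hcr
  have ha0 : a ≠ 0 := by nlinarith [mul_pos hc hb]
  have hmoment : (a / b) ^ α * b = (a / b) ^ (α - 1) * a := by
    rw [rpow_sub_one hr.ne']
    field_simp
  have hpow : c ^ (α - 1) ≤ (a / b) ^ (α - 1) := rpow_le_rpow hc.le hcr.le (by linarith)
  calc a = c ^ (1 - α) * (c ^ (α - 1) * a) := by
        rw [← mul_assoc, ← rpow_add hc]; simp
    _ ≤ c ^ (1 - α) * ((a / b) ^ α * b) := by rw [hmoment]; gcongr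
    _ ≤ c * b + c ^ (1 - α) * ((a / b) ^ α * b) := by linarith [mul_pos hc hb]

lemma setIntegral_le_mul_setIntegral_add_rpow_mul_integral {Ω : Type*} [MeasurableSpace Ω]
    {μ : Measure Ω} {p q : Ω → ℝ} {c α : ℝ} (hp : ∀ x, 0 ≤ p x) (hq : ∀ x, 0 < q x)
    (hpi : Integrable p μ) (hqi : Integrable q μ)
    (hmoment : Integrable (fun x => (p x / q x) ^ α * q x) μ) (hc : 0 < c) (hα : 1 ≤ α)
    (S : Set Ω) :
    ∫ x in S, p x ∂μ ≤
      c * ∫ x in S, q x ∂μ + c ^ (1 - α) * ∫ x, (p x / q x) ^ α * q x ∂μ := by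
  have hmoment_nonneg : ∀ x, 0 ≤ (p x / q x) ^ α * q x := fun x =>
    mul_nonneg (rpow_nonneg (div_nonneg (hp x) (hq x).le) _) (hq x).le
  calc ∫ x in S, p x ∂μ
      ≤ ∫ x in S, (c * q x + c ^ (1 - α) * ((p x / q x) ^ α * q x)) ∂μ :=
        setIntegral_mono hpi.integrableOn
          ((hqi.const_mul c).add (hmoment.const_mul _)).integrableOn
          fun x => le_mul_add_rpow_mul_rpow_div_mul (hp x) (hq x) hc hα
    _ = c * ∫ x in S, q x ∂μ + c ^ (1 - α) * ∫ x in S, (p x / q x) ^ α * q x ∂μ := by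
        rw [integral_add (hqi.const_mul c).integrableOn (hmoment.const_mul _).integrableOn,
          integral_const_mul, integral_const_mul]
    _ ≤ c * ∫ x in S, q x ∂μ + c ^ (1 - α) * ∫ x, (p x / q x) ^ α * q x ∂μ := by
        have := setIntegral_le_integral (s := S) hmoment (.of_forall hmoment_nonneg)
        gcongr

lemma le_exp_mul_of_inv_mul_log_le {I α γ : ℝ} (hα : 1 < α) (h : (α - 1)⁻¹ * log I ≤ γ) :
    I ≤ exp (γ * (α - 1)) := by
  rcases le_or_gt I 0 with hI | hI
  · exact hI.trans (exp_pos _).le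
  rw [← log_le_iff_le_exp hI]
  rw [inv_mul_le_iff₀ (by linarith)] at h
  linarith

theorem rdp_to_dp_general {Ω Data : Type*} [MeasurableSpace Ω] (μ : Measure Ω)
    (adj : Data → Data → Prop) (p : Data → Ω → ℝ)
    (hpos : ∀ D x, 0 < p D x)
    (hnorm : ∀ D, ∫ x, p D x ∂μ = 1)
    (α γ : ℝ) (hα : 1 < α)
    (hint : ∀ D D', adj D D' →
      Integrable (fun x => (p D x / p D' x) ^ α * p D' x) μ)
    (hRDP : ∀ D D', adj D D' →
      (α - 1)⁻¹ * Real.log (∫ x, (p D x / p D' x) ^ α * p D' x ∂μ) ≤ γ)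
    (δ : ℝ) (hδ0 : 0 < δ) :
    ∀ D D', adj D D' → ∀ S : Set Ω, MeasurableSet S →
      ∫ x in S, p D x ∂μ ≤
        Real.exp (γ + Real.log (1 / δ) / (α - 1)) * ∫ x in S, p D' x ∂μ + δ := by
  intro D D' hadj S _
  set ε := γ + log (1 / δ) / (α - 1) with hε
  have hδ : exp ε ^ (1 - α) * exp (γ * (α - 1)) = δ := by
    rw [← exp_mul, ← exp_add, hε, one_div, log_inv]
    convert exp_log hδ0 using 2
    field_simp [(by linarith : α - 1 ≠ 0)]
    ring
  calc ∫ x in S, p D x ∂μ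
      ≤ exp ε * ∫ x in S, p D' x ∂μ +
          exp ε ^ (1 - α) * ∫ x, (p D x / p D' x) ^ α * p D' x ∂μ :=
        setIntegral_le_mul_setIntegral_add_rpow_mul_integral (fun x => (hpos D x).le) (hpos D')
          (integrable_of_integral_eq_one (hnorm D)) (integrable_of_integral_eq_one (hnorm D'))
          (hint D D' hadj) (exp_pos ε) hα.le S
    _ ≤ exp ε * ∫ x in S, p D' x ∂μ + exp ε ^ (1 - α) * exp (γ * (α - 1)) := by
        gcongr
        exact le_exp_mul_of_inv_mul_log_le hα (hRDP D D' hadj)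
    _ = exp ε * ∫ x in S, p D' x ∂μ + δ := by rw [hδ]

/-- RDP to DP conversion: if a mechanism (given by densities `p D` w.r.t. `μ`)
satisfies `(α, γ)`-Rényi differential privacy, then it satisfies
`(γ + ln(1/δ)/(α-1), δ)`-differential privacy for any `0 < δ < 1`. -/
theorem rdp_to_dp {Ω Data : Type*} [MeasurableSpace Ω] (μ : Measure Ω)
    (adj : Data → Data → Prop) (p : Data → Ω → ℝ)
    (hpos : ∀ D x, 0 < p D x) (hmeas : ∀ D, Measurable (p D))
    (hnorm : ∀ D, ∫ x, p D x ∂μ = 1)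
    (α γ : ℝ) (hα : 1 < α)
    (hint : ∀ D D', adj D D' →
      Integrable (fun x => (p D x / p D' x) ^ α * p D' x) μ)
    (hRDP : ∀ D D', adj D D' →
      (α - 1)⁻¹ * Real.log (∫ x, (p D x / p D' x) ^ α * p D' x ∂μ) ≤ γ)
    (δ : ℝ) (hδ0 : 0 < δ) (hδ1 : δ < 1) :
    ∀ D D', adj D D' → ∀ S : Set Ω, MeasurableSet S →
      ∫ x in S, p D x ∂μ ≤
        Real.exp (γ + Real.log (1 / δ) / (α - 1)) * ∫ x in S, p D' x ∂μ + δ :=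
  rdp_to_dp_general μ adj p hpos hnorm α γ hα hint hRDP δ hδ0
end

section
/- If mechanisms M₁ and M₂ each satisfy (α, γ₁)-RDP and (α, γ₂)-RDP respectively (with M₂ possibly depending on the output of M₁ in an adaptive composition), then the composed mechanism (M₁, M₂) satisfies (α, γ₁ + γ₂)-RDP. -/
open MeasureTheory Real

/-!
The Rényi integrand of the composed mechanism factors as `g x * h (x, y)`, where `g` is the
integrand of `M₁` and `h (x, ·)` that of `M₂` after the first output `x`. By Fubini, the inner
integral is at most `exp ((α - 1) * γ₂)` uniformly in `x`, and what remains, `∫ g`, is at most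
`exp ((α - 1) * γ₁)`. Turning these bounds into the bound on the logarithm needs the composed
integral to be positive (`log 0 = 0` is junk); it is, since normalised densities live on nonzero
measures.
-/

lemma inv_mul_log_le_iff_le_exp {β I γ : ℝ} (hβ : 0 < β) (hI : 0 < I) :
    β⁻¹ * log I ≤ γ ↔ I ≤ exp (β * γ) := by
  rw [inv_mul_le_iff₀ hβ, log_le_iff_le_exp hI]

lemma le_exp_of_inv_mul_log_le {β I γ : ℝ} (hβ : 0 < β) (hI : 0 ≤ I) (h : β⁻¹ * log I ≤ γ) :
    I ≤ exp (β * γ) := by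
  rcases hI.eq_or_lt with rfl | hI
  · positivity
  · exact (inv_mul_log_le_iff_le_exp hβ hI).1 h

lemma mul_div_mul_rpow_mul_mul {a b c d : ℝ} (hac : 0 ≤ a / c) (hbd : 0 ≤ b / d) (α : ℝ) :
    (a * b / (c * d)) ^ α * (c * d) = (a / c) ^ α * c * ((b / d) ^ α * d) := by
  rw [← div_mul_div_comm, mul_rpow hac hbd]
  ring

namespace MeasureTheory

variable {α β : Type*} [MeasurableSpace α] [MeasurableSpace β] {μ : Measure α} {ν : Measure β}

lemma Measure.ne_zero_of_integral_eq_one {f : α → ℝ} (h : ∫ x, f x ∂μ = 1) : μ ≠ 0 := by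
  rintro rfl
  simp at h

lemma Measure.prod_ne_zero [SFinite ν] (hμ : μ ≠ 0) (hν : ν ≠ 0) : μ.prod ν ≠ 0 := by
  rw [← Measure.measure_univ_ne_zero, ← Set.univ_prod_univ, Measure.prod_prod]
  exact mul_ne_zero (Measure.measure_univ_ne_zero.2 hμ) (Measure.measure_univ_ne_zero.2 hν)

lemma integral_pos_of_forall_pos {f : α → ℝ} (hf : ∀ x, 0 < f x) (hfi : Integrable f μ)
    (hμ : μ ≠ 0) : 0 < ∫ x, f x ∂μ := by
  rw [integral_pos_iff_support_of_nonneg (fun x => (hf x).le) hfi,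
    Function.support_eq_univ fun x => (hf x).ne']
  exact Measure.measure_univ_pos.2 hμ

variable {g : α → ℝ} {h : α × β → ℝ} {C : ℝ}

lemma integrable_fst_mul_of_integral_le [SFinite ν] (hg : Integrable g μ) (hg0 : ∀ x, 0 ≤ g x)
    (hh : AEStronglyMeasurable h (μ.prod ν)) (hh0 : ∀ ω, 0 ≤ h ω)
    (hhi : ∀ x, Integrable (fun y => h (x, y)) ν) (hC : ∀ x, ∫ y, h (x, y) ∂ν ≤ C) :
    Integrable (fun ω => g ω.1 * h ω) (μ.prod ν) := by
  have hm : AEStronglyMeasurable (fun ω => g ω.1 * h ω) (μ.prod ν) :=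
    hg.aestronglyMeasurable.comp_fst.mul hh
  refine (integrable_prod_iff hm).2 ⟨ae_of_all _ fun x => (hhi x).const_mul (g x), ?_⟩
  refine (hg.mul_const C).mono' hm.norm.integral_prod_right' (ae_of_all _ fun x => ?_)
  have hnorm : ∫ y, ‖g x * h (x, y)‖ ∂ν = g x * ∫ y, h (x, y) ∂ν := by
    simp only [norm_mul, Real.norm_of_nonneg (hg0 x), Real.norm_of_nonneg (hh0 _)]
    exact integral_const_mul _ _
  rw [hnorm, Real.norm_of_nonneg (mul_nonneg (hg0 x) (integral_nonneg fun y => hh0 _))]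
  exact mul_le_mul_of_nonneg_left (hC x) (hg0 x)

lemma integral_fst_mul_le [SFinite μ] [SFinite ν] (hg : Integrable g μ) (hg0 : ∀ x, 0 ≤ g x)
    (hh : AEStronglyMeasurable h (μ.prod ν)) (hh0 : ∀ ω, 0 ≤ h ω)
    (hhi : ∀ x, Integrable (fun y => h (x, y)) ν) (hC : ∀ x, ∫ y, h (x, y) ∂ν ≤ C) :
    ∫ ω, g ω.1 * h ω ∂(μ.prod ν) ≤ (∫ x, g x ∂μ) * C := by
  rw [integral_prod _ (integrable_fst_mul_of_integral_le hg hg0 hh hh0 hhi hC),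
    ← integral_mul_const]
  refine integral_mono_of_nonneg (ae_of_all _ fun x => ?_) (hg.mul_const C)
    (ae_of_all _ fun x => ?_)
  · exact integral_nonneg fun y => mul_nonneg (hg0 x) (hh0 _)
  · change ∫ y, g x * h (x, y) ∂ν ≤ g x * C
    rw [integral_const_mul]
    exact mul_le_mul_of_nonneg_left (hC x) (hg0 x)

end MeasureTheory

theorem rdp_adaptive_composition_general {Ω₁ Ω₂ Data : Type*}
    [MeasurableSpace Ω₁] [MeasurableSpace Ω₂]
    (μ₁ : Measure Ω₁) (μ₂ : Measure Ω₂) [SigmaFinite μ₁] [SigmaFinite μ₂]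
    (adj : Data → Data → Prop)
    (p₁ : Data → Ω₁ → ℝ) (p₂ : Data → Ω₁ → Ω₂ → ℝ)
    (hpos₁ : ∀ D x, 0 < p₁ D x) (hpos₂ : ∀ D x y, 0 < p₂ D x y)
    (hmeas₂ : ∀ D, Measurable (Function.uncurry (p₂ D)))
    (hnorm₁ : ∀ D, ∫ x, p₁ D x ∂μ₁ = 1)
    (hnorm₂ : ∀ D x, ∫ y, p₂ D x y ∂μ₂ = 1)
    (α γ₁ γ₂ : ℝ) (hα : 1 < α)
    (hint₁ : ∀ D D', adj D D' →
      Integrable (fun x => (p₁ D x / p₁ D' x) ^ α * p₁ D' x) μ₁)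
    (hint₂ : ∀ D D', adj D D' → ∀ x,
      Integrable (fun y => (p₂ D x y / p₂ D' x y) ^ α * p₂ D' x y) μ₂)
    (hRDP₁ : ∀ D D', adj D D' →
      (α - 1)⁻¹ * Real.log (∫ x, (p₁ D x / p₁ D' x) ^ α * p₁ D' x ∂μ₁) ≤ γ₁)
    (hRDP₂ : ∀ D D', adj D D' → ∀ x,
      (α - 1)⁻¹ * Real.log (∫ y, (p₂ D x y / p₂ D' x y) ^ α * p₂ D' x y ∂μ₂) ≤ γ₂) :
    ∀ D D', adj D D' →
      (α - 1)⁻¹ * Real.log (∫ ω : Ω₁ × Ω₂,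
          ((p₁ D ω.1 * p₂ D ω.1 ω.2) / (p₁ D' ω.1 * p₂ D' ω.1 ω.2)) ^ α *
            (p₁ D' ω.1 * p₂ D' ω.1 ω.2) ∂(μ₁.prod μ₂)) ≤ γ₁ + γ₂ := by
  intro D D' hadj
  have hβ : 0 < α - 1 := sub_pos.2 hα
  set g : Ω₁ → ℝ := fun x => (p₁ D x / p₁ D' x) ^ α * p₁ D' x
  set h : Ω₁ × Ω₂ → ℝ := fun ω => (p₂ D ω.1 ω.2 / p₂ D' ω.1 ω.2) ^ α * p₂ D' ω.1 ω.2
  have hfactor : ∀ ω : Ω₁ × Ω₂, ((p₁ D ω.1 * p₂ D ω.1 ω.2) / (p₁ D' ω.1 * p₂ D' ω.1 ω.2)) ^ α *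
      (p₁ D' ω.1 * p₂ D' ω.1 ω.2) = g ω.1 * h ω := fun ω =>
    mul_div_mul_rpow_mul_mul (div_pos (hpos₁ D ω.1) (hpos₁ D' ω.1)).le
      (div_pos (hpos₂ D ω.1 ω.2) (hpos₂ D' ω.1 ω.2)).le α
  have hg0 : ∀ x, 0 < g x := fun x => by have := hpos₁ D x; have := hpos₁ D' x; positivity
  have hh0 : ∀ ω, 0 < h ω := fun ω => by
    have := hpos₂ D ω.1 ω.2; have := hpos₂ D' ω.1 ω.2; positivity
  have hh : Measurable h := (((hmeas₂ D).div (hmeas₂ D')).pow_const α).mul (hmeas₂ D')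
  have hbound₁ : ∫ x, g x ∂μ₁ ≤ exp ((α - 1) * γ₁) :=
    le_exp_of_inv_mul_log_le hβ (integral_nonneg fun x => (hg0 x).le) (hRDP₁ D D' hadj)
  have hbound₂ : ∀ x, ∫ y, h (x, y) ∂μ₂ ≤ exp ((α - 1) * γ₂) := fun x =>
    le_exp_of_inv_mul_log_le hβ (integral_nonneg fun y => (hh0 _).le) (hRDP₂ D D' hadj x)
  have hμ₁ : μ₁ ≠ 0 := Measure.ne_zero_of_integral_eq_one (hnorm₁ D)
  have : NeZero μ₁ := ⟨hμ₁⟩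
  have hμ₂ : μ₂ ≠ 0 := Measure.ne_zero_of_integral_eq_one (hnorm₂ D μ₁.nonempty_of_neZero.some)
  have hpos : 0 < ∫ ω, g ω.1 * h ω ∂(μ₁.prod μ₂) :=
    integral_pos_of_forall_pos (fun ω => mul_pos (hg0 ω.1) (hh0 ω))
      (integrable_fst_mul_of_integral_le (hint₁ D D' hadj) (fun x => (hg0 x).le)
        hh.aestronglyMeasurable (fun ω => (hh0 ω).le) (hint₂ D D' hadj) hbound₂)
      (Measure.prod_ne_zero hμ₁ hμ₂)
  rw [integral_congr_ae (ae_of_all _ hfactor), inv_mul_log_le_iff_le_exp hβ hpos, mul_add, exp_add]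
  calc ∫ ω, g ω.1 * h ω ∂(μ₁.prod μ₂) ≤ (∫ x, g x ∂μ₁) * exp ((α - 1) * γ₂) :=
        integral_fst_mul_le (hint₁ D D' hadj) (fun x => (hg0 x).le) hh.aestronglyMeasurable
          (fun ω => (hh0 ω).le) (hint₂ D D' hadj) hbound₂
    _ ≤ exp ((α - 1) * γ₁) * exp ((α - 1) * γ₂) := by gcongr

/-- Adaptive composition of Rényi differential privacy: if `M₁` (densities `p₁ D` on `Ω₁`)
satisfies `(α, γ₁)`-RDP and, for every possible first output `ω₁`, the adaptive second
mechanism `M₂` (densities `p₂ D ω₁` on `Ω₂`) satisfies `(α, γ₂)`-RDP, then the composed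
mechanism with density `(ω₁, ω₂) ↦ p₁ D ω₁ * p₂ D ω₁ ω₂` satisfies `(α, γ₁ + γ₂)`-RDP. -/
theorem rdp_adaptive_composition {Ω₁ Ω₂ Data : Type*}
    [MeasurableSpace Ω₁] [MeasurableSpace Ω₂]
    (μ₁ : Measure Ω₁) (μ₂ : Measure Ω₂) [SigmaFinite μ₁] [SigmaFinite μ₂]
    (adj : Data → Data → Prop)
    (p₁ : Data → Ω₁ → ℝ) (p₂ : Data → Ω₁ → Ω₂ → ℝ)
    (hpos₁ : ∀ D x, 0 < p₁ D x) (hpos₂ : ∀ D x y, 0 < p₂ D x y)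
    (hmeas₁ : ∀ D, Measurable (p₁ D))
    (hmeas₂ : ∀ D, Measurable (Function.uncurry (p₂ D)))
    (hnorm₁ : ∀ D, ∫ x, p₁ D x ∂μ₁ = 1)
    (hnorm₂ : ∀ D x, ∫ y, p₂ D x y ∂μ₂ = 1)
    (α γ₁ γ₂ : ℝ) (hα : 1 < α)
    (hint₁ : ∀ D D', adj D D' →
      Integrable (fun x => (p₁ D x / p₁ D' x) ^ α * p₁ D' x) μ₁)
    (hint₂ : ∀ D D', adj D D' → ∀ x,
      Integrable (fun y => (p₂ D x y / p₂ D' x y) ^ α * p₂ D' x y) μ₂)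
    (hRDP₁ : ∀ D D', adj D D' →
      (α - 1)⁻¹ * Real.log (∫ x, (p₁ D x / p₁ D' x) ^ α * p₁ D' x ∂μ₁) ≤ γ₁)
    (hRDP₂ : ∀ D D', adj D D' → ∀ x,
      (α - 1)⁻¹ * Real.log (∫ y, (p₂ D x y / p₂ D' x y) ^ α * p₂ D' x y ∂μ₂) ≤ γ₂) :
    ∀ D D', adj D D' →
      (α - 1)⁻¹ * Real.log (∫ ω : Ω₁ × Ω₂,
          ((p₁ D ω.1 * p₂ D ω.1 ω.2) / (p₁ D' ω.1 * p₂ D' ω.1 ω.2)) ^ α *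
            (p₁ D' ω.1 * p₂ D' ω.1 ω.2) ∂(μ₁.prod μ₂)) ≤ γ₁ + γ₂ :=
  rdp_adaptive_composition_general μ₁ μ₂ adj p₁ p₂ hpos₁ hpos₂ hmeas₂ hnorm₁ hnorm₂ α γ₁ γ₂ hα hint₁
    hint₂ hRDP₁ hRDP₂
end

section
/- Let X be a binomial random variable with parameters N̄ and q, and let N_B ≥ 1. Then the ratio c₀/c₁ of normalizing constants satisfies 1 + q·p(N_B−1; N, q)/(1 − P(N_B−1; N, q)) ≤ 1 + q·p(N_B−1; N̄, q)/(1 − P(N_B−1; N̄, q)) for all N ≥ N̄ whenever N_B ≤ qN̄, where p and P are the binomial pmf and cdf. Equivalently, the function N ↦ p(N_B−1; N, q)/(1 − P(N_B−1; N, q)) is non-increasing in N for N ≥ N_B/q. -/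
open Finset

/-- Binomial probability mass function `p(k; n, q)`. -/
noncomputable def binPMF (q : ℝ) (n k : ℕ) : ℝ := (n.choose k : ℝ) * q ^ k * (1 - q) ^ (n - k)

/-- Binomial cumulative distribution function `P(k; n, q)`. -/
noncomputable def binCDF (q : ℝ) (n k : ℕ) : ℝ := ∑ j ∈ Finset.range (k + 1), binPMF q n j

/-!
Write `k = N_B − 1`, `p_n = p(k; n, q)` and `T_n = 1 − P(k; n, q)`. Pascal's rule gives
`p_{n+1} = (1 − q) p_n + q p(k − 1; n, q)` and `T_{n+1} = T_n + q p_n`. When `N_B ≤ qn`, the index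
`k − 1` lies below the mode of the binomial law, so `p(k − 1; n, q) ≤ p_n`; hence
`p_{n+1} ≤ p_n` while `T_n ≤ T_{n+1}`, and the ratio `p_n / T_n` decreases.
-/

section Binomial

variable {q : ℝ}

lemma binPMF_nonneg (hq0 : 0 ≤ q) (hq1 : q ≤ 1) (n k : ℕ) : 0 ≤ binPMF q n k := by
  have : 0 ≤ 1 - q := by linarith
  unfold binPMF
  positivity

lemma binPMF_self (q : ℝ) (n : ℕ) : binPMF q n n = q ^ n := by
  simp [binPMF]

lemma binCDF_self (q : ℝ) (n : ℕ) : binCDF q n n = 1 := by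
  have h := add_pow q (1 - q) n
  rw [add_sub_cancel, one_pow] at h
  rw [binCDF, h]
  exact sum_congr rfl fun j _ => by rw [binPMF]; ring

lemma binPMF_succ_zero (q : ℝ) (n : ℕ) : binPMF q (n + 1) 0 = (1 - q) * binPMF q n 0 := by
  simp [binPMF, pow_succ]
  ring

lemma binPMF_succ_succ (q : ℝ) (n j : ℕ) :
    binPMF q (n + 1) (j + 1) = (1 - q) * binPMF q n (j + 1) + q * binPMF q n j := by
  simp only [binPMF, Nat.choose_succ_succ, Nat.cast_add, Nat.succ_sub_succ]
  rcases lt_or_ge j n with hjn | hnj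
  · rw [show n - j = n - (j + 1) + 1 by omega]
    ring
  · rw [Nat.choose_eq_zero_of_lt (by omega : n < j + 1)]
    ring

lemma binCDF_succ (q : ℝ) (n k : ℕ) :
    binCDF q (n + 1) k = binCDF q n k - q * binPMF q n k := by
  induction k with
  | zero =>
    simp only [binCDF, zero_add, sum_range_one, binPMF_succ_zero]
    ring
  | succ k ih =>
    simp only [binCDF] at ih ⊢
    rw [sum_range_succ, sum_range_succ (n := k + 1), ih, binPMF_succ_succ]
    ring

lemma binCDF_lt_one (hq0 : 0 < q) (hq1 : q ≤ 1) {n k : ℕ} (hkn : k < n) : binCDF q n k < 1 := by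
  rw [← binCDF_self q n, binCDF, binCDF]
  refine sum_lt_sum_of_subset (range_subset_range.2 (by omega)) (self_mem_range_succ n)
    (by simp only [mem_range]; omega) ?_ fun j _ _ => binPMF_nonneg hq0.le hq1 n j
  rw [binPMF_self]
  positivity

lemma binPMF_le_binPMF_succ (hq0 : 0 ≤ q) (hq1 : q < 1) {n k : ℕ}
    (h : (k + 1 : ℝ) ≤ q * (n + 1)) : binPMF q n k ≤ binPMF q n (k + 1) := by
  have hkn : k < n := by
    have : (k : ℝ) < n := by nlinarith
    exact_mod_cast this
  have hratio : binPMF q n (k + 1) * ((k + 1) * (1 - q)) = binPMF q n k * ((n - k) * q) := by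
    have hc := congrArg (Nat.cast (R := ℝ)) (Nat.choose_succ_right_eq n k)
    push_cast [Nat.cast_sub hkn.le] at hc
    simp only [binPMF, show n - k = n - (k + 1) + 1 by omega]
    linear_combination q ^ (k + 1) * (1 - q) ^ (n - (k + 1)) * (1 - q) * hc
  have hpos : 0 < (k + 1 : ℝ) * (1 - q) := by
    have : 0 < 1 - q := by linarith
    positivity
  refine le_of_mul_le_mul_right ?_ hpos
  rw [hratio]
  exact mul_le_mul_of_nonneg_left (by linarith) (binPMF_nonneg hq0 hq1.le n k)

lemma binPMF_succ_le (hq0 : 0 < q) (hq1 : q < 1) {n k : ℕ} (h : (k + 1 : ℝ) ≤ q * n) :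
    binPMF q (n + 1) k ≤ binPMF q n k := by
  have hp := binPMF_nonneg hq0.le hq1.le n
  cases k with
  | zero => rw [binPMF_succ_zero]; nlinarith [hp 0]
  | succ j =>
    have hmode := binPMF_le_binPMF_succ hq0.le hq1 (n := n) (k := j) (by push_cast at h; nlinarith)
    rw [binPMF_succ_succ]
    nlinarith

lemma binPMF_div_one_sub_binCDF_succ_le (hq0 : 0 < q) (hq1 : q < 1) {n k : ℕ}
    (h : (k + 1 : ℝ) ≤ q * n) :
    binPMF q (n + 1) k / (1 - binCDF q (n + 1) k) ≤ binPMF q n k / (1 - binCDF q n k) := by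
  have hkn : k < n := by
    have : (k : ℝ) < n := by nlinarith
    exact_mod_cast this
  have hp := binPMF_nonneg hq0.le hq1.le n k
  refine div_le_div₀ hp (binPMF_succ_le hq0 hq1 h)
    (sub_pos.2 (binCDF_lt_one hq0 hq1.le hkn)) ?_
  rw [binCDF_succ]
  linarith [mul_nonneg hq0.le hp]

end Binomial

/-- The rejection-impairment ratio `p(N_B−1; N, q)/(1 − P(N_B−1; N, q))` is non-increasing
in the dataset size `N` for `N ≥ N_B/q`; in particular, whenever `N_B ≤ qN̄`, for all
`N ≥ N̄` we have
`1 + q·p(N_B−1; N, q)/(1 − P(N_B−1; N, q)) ≤ 1 + q·p(N_B−1; N̄, q)/(1 − P(N_B−1; N̄, q))`. -/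
theorem binom_rejection_ratio_antitone (q : ℝ) (hq0 : 0 < q) (hq1 : q < 1)
    (NB Nbar : ℕ) (hNB : 1 ≤ NB) (hNBq : (NB : ℝ) ≤ q * Nbar) :
    (∀ N : ℕ, Nbar ≤ N →
      1 + q * binPMF q N (NB - 1) / (1 - binCDF q N (NB - 1)) ≤
        1 + q * binPMF q Nbar (NB - 1) / (1 - binCDF q Nbar (NB - 1))) ∧
    (∀ N M : ℕ, (NB : ℝ) ≤ q * N → N ≤ M →
      binPMF q M (NB - 1) / (1 - binCDF q M (NB - 1)) ≤
        binPMF q N (NB - 1) / (1 - binCDF q N (NB - 1))) := by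
  have hk : ((NB - 1 : ℕ) + 1 : ℝ) = NB := by exact_mod_cast Nat.sub_add_cancel hNB
  have antitone : ∀ N M : ℕ, (NB : ℝ) ≤ q * N → N ≤ M →
      binPMF q M (NB - 1) / (1 - binCDF q M (NB - 1)) ≤
        binPMF q N (NB - 1) / (1 - binCDF q N (NB - 1)) := by
    intro N M hN hNM
    refine antitoneOn_nat_Ici_of_succ_le
      (f := fun n => binPMF q n (NB - 1) / (1 - binCDF q n (NB - 1)))
      (fun n hn => ?_) (Set.mem_Ici.2 le_rfl) hNM hNM
    have hn : (N : ℝ) ≤ n := by exact_mod_cast hn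
    exact binPMF_div_one_sub_binCDF_succ_le hq0 hq1 (by rw [hk]; nlinarith)
  refine ⟨fun N hN => ?_, antitone⟩
  simp only [mul_div_assoc]
  gcongr 1 + q * ?_
  exact antitone Nbar N hNBq hN
end
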